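/- Let p_1, …, p_n, w_1, …, w_n ≥ 0 and P, W ≥ 0 be given (a Knapsack instance). Construct the BNPG game with symmetric altruism: V = {u_1, …, u_{2n+1}}; E = {{u_i, u_{n+i}}, {u_i, u_{2n+1}} : i ∈ [n]} (a tree); a = 1; g_{u_{2n+1}}(x) = 0, g_{u_i}(x) = p_i·x and g_{u_{n+i}}(x) = P·x for all x ≥ 0 and i ∈ [n]; c_v = P for all v ∈ V. Assign to each undirected altruistic edge {u_{2n+1}, u_i} the cost w_i and to each edge {u_{n+i}, u_i} the cost 0 (i ∈ [n]). Then the following are equivalent: (1) there exists S ⊆ [n] with ∑_{i∈S} p_i ≥ P and ∑_{i∈S} w_i ≤ W; (2) there exists a set E' of undirected edges, each edge of E' being an edge of E, with total cost at most W such that the all-ones profile (every player invests) is a pure strategy Nash equilibrium of the BNPG game with symmetric altruism (G, (V,E'), (g_v), (c_v), 1). -/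

import Mathlib

open Finset

/-- `Δg(t) = g(t+1) - g(t)`. -/
def dg (g : ℕ → ℝ) (t : ℕ) : ℝ := g (t + 1) - g t

/-- Number of `G`-neighbors of `v` playing 1 in the profile `x`. -/
def nv {W : Type*} [Fintype W] [DecidableEq W] (G : SimpleGraph W) [DecidableRel G.Adj]
    (x : W → Bool) (v : W) : ℕ :=
  ((G.neighborFinset v).filter (fun u => x u = true)).card

/-- Utility of player `v` in a BNPG game with altruism: input graph `G`,
altruistic (out-)neighborhoods `N`, externality functions `g`, costs `c`,
altruism parameter `a`. -/
def util {W : Type*} [Fintype W] [DecidableEq W] (G : SimpleGraph W) [DecidableRel G.Adj]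
    (N : W → Finset W) (g : W → ℕ → ℝ) (c : W → ℝ) (a : ℝ)
    (x : W → Bool) (v : W) : ℝ :=
  g v ((x v).toNat + nv G x v)
    + a * ∑ u ∈ N v, g u ((x u).toNat + nv G x u)
    - c v * (x v).toNat

/-- Pure strategy Nash equilibrium of a BNPG game with altruism. -/
def isPSNE {W : Type*} [Fintype W] [DecidableEq W] (G : SimpleGraph W) [DecidableRel G.Adj]
    (N : W → Finset W) (g : W → ℕ → ℝ) (c : W → ℝ) (a : ℝ) (x : W → Bool) : Prop :=
  ∀ v : W, ∀ b : Bool,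
    util G N g c a x v ≥ util G N g c a (Function.update x v b) v

/-- Vertex set of the Knapsack reduction: `Sum.inl (Sum.inl i)` is `u_{i+1}`,
`Sum.inl (Sum.inr i)` is `u_{n+i+1}`, and `Sum.inr ()` is `u_{2n+1}`. -/
abbrev VK (n : ℕ) := (Fin n ⊕ Fin n) ⊕ Unit

/-- Adjacency of the tree `E = {{u_i, u_{n+i}}, {u_i, u_{2n+1}} : i ∈ [n]}`. -/
def adjK {n : ℕ} : VK n → VK n → Bool
  | Sum.inl (Sum.inl i), Sum.inl (Sum.inr j) => decide (i = j)
  | Sum.inl (Sum.inr i), Sum.inl (Sum.inl j) => decide (i = j)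
  | Sum.inl (Sum.inl _), Sum.inr _ => true
  | Sum.inr _, Sum.inl (Sum.inl _) => true
  | _, _ => false

/-- The input network (a tree) of the Knapsack reduction. -/
def GK (n : ℕ) : SimpleGraph (VK n) where
  Adj a b := adjK a b = true
  symm := ⟨by
    rintro ((i | i) | u) ((j | j) | u') h <;> simp_all [adjK]⟩
  loopless := ⟨by
    rintro ((i | i) | u) h <;> simp [adjK] at h⟩

instance (n : ℕ) : DecidableRel (GK n).Adj :=
  fun a b => inferInstanceAs (Decidable (adjK a b = true))

/-- Externality functions: `g_{u_i}(x) = p_i·x`, `g_{u_{n+i}}(x) = P·x`,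
`g_{u_{2n+1}}(x) = 0`. -/
def gK {n : ℕ} (p : Fin n → ℝ) (P : ℝ) : VK n → ℕ → ℝ
  | Sum.inl (Sum.inl i) => fun t => p i * t
  | Sum.inl (Sum.inr _) => fun t => P * t
  | Sum.inr _ => fun _ => 0

/-!
At the all-invest profile, player `v` has no profitable deviation iff
`c_v ≤ Δg_v + a · ∑_{u ∈ N_v} Δg_u`, the marginal gains taken at the current degrees. In the
reduction every marginal gain is constant (`p_i` at `u_i`, `P` at `u_{n+i}`, `0` at `u_{2n+1}`),
so the condition at `u_{2n+1}` reads `P ≤ ∑ p_i` over the altruistic edges `{u_i, u_{2n+1}}`,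
while the free edges `{u_i, u_{n+i}}` take care of all other players. A knapsack solution `S`
therefore corresponds to `E` with the edges `{u_i, u_{2n+1}}`, `i ∉ S`, removed.
-/

open Function

section AllInvest

variable {V : Type*} [Fintype V] [DecidableEq V] (G : SimpleGraph V) [DecidableRel G.Adj]

lemma nv_const_true (v : V) : nv G (fun _ => true) v = G.degree v := by
  simp [nv, SimpleGraph.card_neighborFinset_eq_degree]

lemma nv_update_false_self (v : V) :
    nv G (update (fun _ => true) v false) v = G.degree v := by
  rw [nv, Finset.filter_true_of_mem, SimpleGraph.card_neighborFinset_eq_degree]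
  intro u hu
  simp [update_of_ne ((G.mem_neighborFinset v u).1 hu).ne']

lemma nv_update_false_of_adj {u v : V} (h : G.Adj v u) :
    nv G (update (fun _ => true) v false) u + 1 = G.degree u := by
  have : (G.neighborFinset u).filter (fun w => update (fun _ => true) v false w = true)
      = (G.neighborFinset u).erase v := by
    ext w
    by_cases hw : w = v <;> simp [hw, update_apply]
  rw [nv, this, Finset.card_erase_add_one ((G.mem_neighborFinset u v).2 h.symm),
    SimpleGraph.card_neighborFinset_eq_degree]

variable (N : V → Finset V) (g : V → ℕ → ℝ) (c : V → ℝ) (a : ℝ)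

/-- Each altruistic neighbour of `v` loses exactly one invested `G`-neighbour when `v` withdraws,
because altruistic edges are edges of `G`. -/
lemma util_const_true_sub_update_false (v : V) (hN : ∀ u ∈ N v, G.Adj v u) :
    util G N g c a (fun _ => true) v - util G N g c a (update (fun _ => true) v false) v
      = dg (g v) (G.degree v) + a * ∑ u ∈ N v, dg (g u) (G.degree u) - c v := by
  have hsum : ∑ u ∈ N v, g u ((update (fun _ => true) v false u).toNat
        + nv G (update (fun _ => true) v false) u) = ∑ u ∈ N v, g u (G.degree u) := by
    refine Finset.sum_congr rfl fun u hu => ?_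
    rw [update_of_ne (hN u hu).ne', Bool.toNat_true, add_comm,
      nv_update_false_of_adj G (hN u hu)]
  simp only [util, hsum, nv_const_true, nv_update_false_self, update_self, Bool.toNat_true,
    Bool.toNat_false, dg, Finset.sum_sub_distrib]
  push_cast
  ring_nf

lemma isPSNE_const_true_iff (hN : ∀ v, ∀ u ∈ N v, G.Adj v u) :
    isPSNE G N g c a (fun _ => true) ↔
      ∀ v, c v ≤ dg (g v) (G.degree v) + a * ∑ u ∈ N v, dg (g u) (G.degree u) := by
  refine forall_congr' fun v => ?_
  rw [← sub_nonneg, ← util_const_true_sub_update_false G N g c a v (hN v), sub_nonneg]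
  refine ⟨fun h => h false, fun h b => ?_⟩
  cases b
  · exact h
  · rw [update_eq_self]

end AllInvest

section Knapsack

variable {n : ℕ} {p : Fin n → ℝ} {P : ℝ}

@[simp] lemma dg_gK_inl_inl (i : Fin n) (t : ℕ) : dg (gK p P (Sum.inl (Sum.inl i))) t = p i := by
  simp only [dg, gK]; push_cast; ring

@[simp] lemma dg_gK_inl_inr (i : Fin n) (t : ℕ) : dg (gK p P (Sum.inl (Sum.inr i))) t = P := by
  simp only [dg, gK]; push_cast; ring

@[simp] lemma dg_gK_inr (u : Unit) (t : ℕ) : dg (gK p P (Sum.inr u)) t = 0 := by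
  simp [dg, gK]

variable {N : VK n → Finset (VK n)}

lemma sum_dg_gK_inr (hN : ∀ u ∈ N (Sum.inr ()), (GK n).Adj (Sum.inr ()) u) :
    ∑ u ∈ N (Sum.inr ()), dg (gK p P u) ((GK n).degree u)
      = ∑ i ∈ univ.filter (fun i => Sum.inl (Sum.inl i) ∈ N (Sum.inr ())), p i := by
  have : N (Sum.inr ()) = (univ.filter (fun i => Sum.inl (Sum.inl i) ∈ N (Sum.inr ()))).map
      (Embedding.inl.trans Embedding.inl) := by
    ext u
    have := hN u
    rcases u with ((i | i) | ⟨⟩) <;> simp_all [GK, adjK]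
  rw [this, Finset.sum_map]
  simp

lemma sum_dg_gK_inl_inl (i : Fin n)
    (hN : ∀ u ∈ N (Sum.inl (Sum.inl i)), (GK n).Adj (Sum.inl (Sum.inl i)) u) :
    ∑ u ∈ N (Sum.inl (Sum.inl i)), dg (gK p P u) ((GK n).degree u)
      = if Sum.inl (Sum.inr i) ∈ N (Sum.inl (Sum.inl i)) then P else 0 := by
  rw [← Finset.sum_ite_eq' _ _ (fun _ => P)]
  refine Finset.sum_congr rfl fun u hu => ?_
  have := hN u hu
  rcases u with ((j | j) | ⟨⟩) <;> simp_all [GK, adjK]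

lemma sum_dg_gK_inl_inr (i : Fin n)
    (hN : ∀ u ∈ N (Sum.inl (Sum.inr i)), (GK n).Adj (Sum.inl (Sum.inr i)) u) :
    ∑ u ∈ N (Sum.inl (Sum.inr i)), dg (gK p P u) ((GK n).degree u)
      = if Sum.inl (Sum.inl i) ∈ N (Sum.inl (Sum.inr i)) then p i else 0 := by
  rw [← Finset.sum_ite_eq' _ _ (fun _ => p i)]
  refine Finset.sum_congr rfl fun u hu => ?_
  have := hN u hu
  rcases u with ((j | j) | ⟨⟩) <;> simp_all [GK, adjK]

lemma isPSNE_GK_iff (hN : ∀ v, ∀ u ∈ N v, (GK n).Adj v u) :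
    isPSNE (GK n) N (gK p P) (fun _ => P) 1 (fun _ => true) ↔
      P ≤ ∑ i ∈ univ.filter (fun i => Sum.inl (Sum.inl i) ∈ N (Sum.inr ())), p i ∧
      (∀ i, P ≤ p i + if Sum.inl (Sum.inr i) ∈ N (Sum.inl (Sum.inl i)) then P else 0) ∧
      (∀ i, P ≤ P + if Sum.inl (Sum.inl i) ∈ N (Sum.inl (Sum.inr i)) then p i else 0) := by
  rw [isPSNE_const_true_iff _ _ _ _ _ hN]
  simp only [Sum.forall, Unique.forall_iff, one_mul, dg_gK_inl_inl, dg_gK_inl_inr, dg_gK_inr,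
    zero_add, sum_dg_gK_inr (hN _), sum_dg_gK_inl_inl _ (hN _), sum_dg_gK_inl_inr _ (hN _)]
  tauto

end Knapsack

section KnapsackAltruism

variable {n : ℕ} (S : Finset (Fin n))

def knapsackAltruism : SimpleGraph (VK n) :=
  GK n \ SimpleGraph.fromEdgeSet {e | ∃ i ∉ S, e = s(Sum.inl (Sum.inl i), Sum.inr ())}

lemma knapsackAltruism_le : knapsackAltruism S ≤ GK n := sdiff_le

lemma knapsackAltruism_adj_inl_inr (i : Fin n) :
    (knapsackAltruism S).Adj (Sum.inl (Sum.inl i)) (Sum.inl (Sum.inr i)) := by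
  simp [knapsackAltruism, GK, adjK]

lemma knapsackAltruism_adj_inr_iff (i : Fin n) :
    (knapsackAltruism S).Adj (Sum.inr ()) (Sum.inl (Sum.inl i)) ↔ i ∈ S := by
  simp [knapsackAltruism, GK, adjK]

end KnapsackAltruism

theorem statement15_general (n : ℕ) (p w : Fin n → ℝ) (P W : ℝ)
    (hp : ∀ i, 0 ≤ p i) :
    (∃ S : Finset (Fin n), P ≤ ∑ i ∈ S, p i ∧ ∑ i ∈ S, w i ≤ W) ↔
    (∃ N : VK n → Finset (VK n),
      (∀ v : VK n, ∀ u ∈ N v, (GK n).Adj v u) ∧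
      (∀ u v : VK n, u ∈ N v ↔ v ∈ N u) ∧
      (∑ i ∈ Finset.univ.filter
          (fun i : Fin n => (Sum.inl (Sum.inl i) : VK n) ∈ N (Sum.inr ())), w i) ≤ W ∧
      isPSNE (GK n) N (gK p P) (fun _ => P) 1 (fun _ => true)) := by
  constructor
  · rintro ⟨S, hpS, hwS⟩
    classical
    set H := knapsackAltruism S
    have hHG : ∀ v, ∀ u ∈ H.neighborFinset v, (GK n).Adj v u := fun v u hu =>
      knapsackAltruism_le S ((H.mem_neighborFinset v u).1 hu)
    have hS : univ.filter (fun i => Sum.inl (Sum.inl i) ∈ H.neighborFinset (Sum.inr ())) = S := by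
      ext i
      simp [H, knapsackAltruism_adj_inr_iff]
    refine ⟨fun v => H.neighborFinset v, hHG, fun u v => by simp [H.adj_comm], hS ▸ hwS, ?_⟩
    rw [isPSNE_GK_iff hHG, hS]
    refine ⟨hpS, fun i => ?_, fun i => ?_⟩
    · simpa [H, knapsackAltruism_adj_inl_inr] using hp i
    · simpa [H, H.adj_comm, knapsackAltruism_adj_inl_inr] using hp i
  · rintro ⟨N, hNG, -, hwN, hN⟩
    exact ⟨_, ((isPSNE_GK_iff hNG).1 hN).1, hwN⟩

/-- correctness of the Knapsack reduction for ANM with symmetric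
altruism on a tree. The Knapsack instance `(p, w, P, W)` has a solution iff there is
an undirected altruistic network `N` (a symmetric neighborhood system whose edges
join `G`-adjacent vertices) whose cost — the total weight of the edges
`{u_{2n+1}, u_i}` used, the edges `{u_i, u_{n+i}}` being free — is at most `W`,
making the all-invest profile a PSNE. -/
theorem statement15 (n : ℕ) (p w : Fin n → ℝ) (P W : ℝ)
    (hp : ∀ i, 0 ≤ p i) (hw : ∀ i, 0 ≤ w i) (hP : 0 ≤ P) (hW : 0 ≤ W) :
    (∃ S : Finset (Fin n), P ≤ ∑ i ∈ S, p i ∧ ∑ i ∈ S, w i ≤ W) ↔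
    (∃ N : VK n → Finset (VK n),
      (∀ v : VK n, ∀ u ∈ N v, (GK n).Adj v u) ∧
      (∀ u v : VK n, u ∈ N v ↔ v ∈ N u) ∧
      (∑ i ∈ Finset.univ.filter
          (fun i : Fin n => (Sum.inl (Sum.inl i) : VK n) ∈ N (Sum.inr ())), w i) ≤ W ∧
      isPSNE (GK n) N (gK p P) (fun _ => P) 1 (fun _ => true)) :=
  statement15_general n p w P W hp
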